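/- Let (X,d) be a finite ultrametric space with |X| ≥ 2 such that |Sp(X)| = |X| − 1, and suppose the diametral graph G_d of (X,d) is complete bipartite with parts X₁ and X₂. Then Sp(X) = Sp(X₁) ∪ Sp(X₂) ∪ {diam X} and Sp(X₁) ∩ Sp(X₂) = ∅, where Sp(Xᵢ) denotes the spectrum of the metric subspace (Xᵢ,d). -/

import Mathlib

/-- The spectrum of a metric (sub)space: the set of nonzero distances realized
between distinct points of `A`. -/
def spec {X : Type*} [MetricSpace X] (A : Set X) : Set ℝ :=
  {r : ℝ | ∃ x ∈ A, ∃ y ∈ A, x ≠ y ∧ dist x y = r}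

lemma spec_finite {X : Type*} [MetricSpace X] [Fintype X] (A : Set X) :
    (spec A).Finite := by
  apply Set.Finite.subset (Set.finite_range (fun p : X × X => dist p.1 p.2))
  rintro r ⟨x, _, y, _, _, hd⟩
  exact ⟨(x, y), hd⟩

lemma spec_key {X : Type*} [MetricSpace X] [Fintype X]
    (hultra : ∀ x y z : X, dist x y ≤ max (dist x z) (dist z y)) :
    ∀ n : ℕ, ∀ A : Set X, A.ncard ≤ n → A.Nonempty → (spec A).ncard + 1 ≤ A.ncard := by
  intro n
  induction n with
  | zero =>
    intro A hA hne
    have := (Set.ncard_pos (Set.toFinite A)).mpr hne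
    omega
  | succ n IH =>
    intro A hA hne
    have hApos := (Set.ncard_pos (Set.toFinite A)).mpr hne
    by_cases hs : spec A = ∅
    · simp [hs]; omega
    · have hsne : (spec A).Nonempty := Set.nonempty_iff_ne_empty.mpr hs
      obtain ⟨r, hr, hmax⟩ := Set.Finite.exists_maximalFor id _ (spec_finite A) hsne
      have hmax' : ∀ s ∈ spec A, s ≤ r := by
        intro s hsA
        by_contra h
        push_neg at h
        exact absurd (hmax hsA h.le) (by simp; linarith)
      obtain ⟨x₀, hx₀, y₀, hy₀, hxy, hd⟩ := hr
      have hrpos : 0 < r := by rw [← hd]; exact dist_pos.mpr hxy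
      set C : Set X := {x ∈ A | dist x x₀ < r} with hC
      set B : Set X := {x ∈ A | r ≤ dist x x₀} with hB
      have hx₀C : x₀ ∈ C := ⟨hx₀, by simpa using hrpos⟩
      have hy₀B : y₀ ∈ B := ⟨hy₀, by rw [dist_comm, hd]⟩
      have hBr : ∀ y ∈ B, dist y x₀ = r := by
        rintro y ⟨hyA, hyr⟩
        refine le_antisymm ?_ hyr
        apply hmax'
        exact ⟨y, hyA, x₀, hx₀, fun h => by simp [h] at hyr; linarith, rfl⟩
      have hcross : ∀ x ∈ C, ∀ y ∈ B, dist x y = r := by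
        rintro x ⟨hxA, hxr⟩ y hyB
        have hyr := hBr y hyB
        refine le_antisymm ?_ ?_
        · calc dist x y ≤ max (dist x x₀) (dist x₀ y) := hultra x y x₀
            _ ≤ r := max_le hxr.le (by rw [dist_comm]; exact hyr.le)
        · have := hultra y x₀ x
          rw [hyr] at this
          rcases max_cases (dist y x) (dist x x₀) with ⟨h1, _⟩ | ⟨h1, _⟩
          · rw [h1] at this; rwa [dist_comm]
          · rw [h1] at this; linarith
      have hsub : spec A ⊆ spec C ∪ spec B ∪ {r} := by
        rintro s ⟨u, hu, v, hv, huv, hdist⟩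
        by_cases huC : dist u x₀ < r <;> by_cases hvC : dist v x₀ < r
        · exact Or.inl (Or.inl ⟨u, ⟨hu, huC⟩, v, ⟨hv, hvC⟩, huv, hdist⟩)
        · right
          have : dist u v = r := hcross u ⟨hu, huC⟩ v ⟨hv, not_lt.mp hvC⟩
          simp [← hdist, this]
        · right
          have : dist v u = r := hcross v ⟨hv, hvC⟩ u ⟨hu, not_lt.mp huC⟩
          rw [dist_comm] at this
          simp [← hdist, this]
        · exact Or.inl (Or.inr ⟨u, ⟨hu, not_lt.mp huC⟩, v, ⟨hv, not_lt.mp hvC⟩, huv, hdist⟩)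
      -- counting
      have hdisjCB : Disjoint C B := by
        rw [Set.disjoint_iff]
        rintro x ⟨⟨_, h1⟩, ⟨_, h2⟩⟩
        exact absurd h2 (not_le.mpr h1)
      have hunionCB : C ∪ B = A := by
        ext x
        constructor
        · rintro (⟨h, _⟩ | ⟨h, _⟩) <;> exact h
        · intro h
          rcases lt_or_ge (dist x x₀) r with h' | h'
          · exact Or.inl ⟨h, h'⟩
          · exact Or.inr ⟨h, h'⟩
      have hcardCB : C.ncard + B.ncard = A.ncard := by
        rw [← hunionCB, Set.ncard_union_eq hdisjCB (Set.toFinite C) (Set.toFinite B)]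
      have hCpos := (Set.ncard_pos (Set.toFinite C)).mpr ⟨x₀, hx₀C⟩
      have hBpos := (Set.ncard_pos (Set.toFinite B)).mpr ⟨y₀, hy₀B⟩
      have hIC := IH C (by omega) ⟨x₀, hx₀C⟩
      have hIB := IH B (by omega) ⟨y₀, hy₀B⟩
      have h1 : (spec A).ncard ≤ (spec C ∪ spec B ∪ {r}).ncard :=
        Set.ncard_le_ncard hsub (((spec_finite C).union (spec_finite B)).union (Set.finite_singleton r))
      have h2 : (spec C ∪ spec B ∪ {r}).ncard ≤ (spec C).ncard + (spec B).ncard + 1 := by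
        calc (spec C ∪ spec B ∪ {r}).ncard ≤ (spec C ∪ spec B).ncard + ({r} : Set ℝ).ncard :=
              Set.ncard_union_le _ _
          _ ≤ (spec C).ncard + (spec B).ncard + 1 := by
              have := Set.ncard_union_le (spec C) (spec B)
              simp [Set.ncard_singleton]; omega
      omega


/-- Let `(X,d)` be a finite ultrametric space with `|X| ≥ 2` such that
`|Sp(X)| = |X| − 1`, and suppose the diametral graph is complete bipartite with parts
`X₁` and `X₂`. Then `Sp(X) = Sp(X₁) ∪ Sp(X₂) ∪ {diam X}` and `Sp(X₁) ∩ Sp(X₂) = ∅`. -/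
theorem stmt4 {X : Type*} [MetricSpace X] [Fintype X]
    (hultra : ∀ x y z : X, dist x y ≤ max (dist x z) (dist z y))
    (hcard : 2 ≤ Fintype.card X)
    (hspec : (spec (Set.univ : Set X)).ncard = Fintype.card X - 1)
    (X₁ X₂ : Set X) (h₁ : X₁.Nonempty) (h₂ : X₂.Nonempty)
    (hdisj : X₁ ∩ X₂ = ∅) (hunion : X₁ ∪ X₂ = Set.univ)
    (hbip : ∀ u v : X, dist u v = Metric.diam (Set.univ : Set X) ↔
      ((u ∈ X₁ ∧ v ∈ X₂) ∨ (u ∈ X₂ ∧ v ∈ X₁))) :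
    spec (Set.univ : Set X) = spec X₁ ∪ spec X₂ ∪ {Metric.diam (Set.univ : Set X)} ∧
      spec X₁ ∩ spec X₂ = ∅ := by
  set D := Metric.diam (Set.univ : Set X) with hD
  obtain ⟨a, ha⟩ := h₁
  obtain ⟨b, hb⟩ := h₂
  have hab : a ≠ b := by
    rintro rfl
    exact absurd (Set.mem_inter ha hb) (by simp [hdisj])
  have habD : dist a b = D := (hbip a b).mpr (Or.inl ⟨ha, hb⟩)
  -- union equality
  have hun : spec (Set.univ : Set X) = spec X₁ ∪ spec X₂ ∪ {D} := by
    ext s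
    constructor
    · rintro ⟨u, -, v, -, huv, hdist⟩
      have hu : u ∈ X₁ ∪ X₂ := hunion ▸ Set.mem_univ u
      have hv : v ∈ X₁ ∪ X₂ := hunion ▸ Set.mem_univ v
      rcases hu with hu | hu <;> rcases hv with hv | hv
      · exact Or.inl (Or.inl ⟨u, hu, v, hv, huv, hdist⟩)
      · right; rw [← hdist]; exact (hbip u v).mpr (Or.inl ⟨hu, hv⟩)
      · right; rw [← hdist]; exact (hbip u v).mpr (Or.inr ⟨hu, hv⟩)
      · exact Or.inl (Or.inr ⟨u, hu, v, hv, huv, hdist⟩)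
    · rintro ((⟨u, hu, v, hv, huv, hdist⟩ | ⟨u, hu, v, hv, huv, hdist⟩) | hs)
      · exact ⟨u, trivial, v, trivial, huv, hdist⟩
      · exact ⟨u, trivial, v, trivial, huv, hdist⟩
      · exact ⟨a, trivial, b, trivial, hab, by rw [habD]; exact hs.symm⟩
  refine ⟨hun, ?_⟩
  -- D not in spec X₁ or spec X₂
  have hD1 : D ∉ spec X₁ := by
    rintro ⟨u, hu, v, hv, huv, hdist⟩
    rcases (hbip u v).mp hdist with ⟨_, hv2⟩ | ⟨hu2, _⟩
    · exact absurd (Set.mem_inter hv hv2) (by simp [hdisj])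
    · exact absurd (Set.mem_inter hu hu2) (by simp [hdisj])
  have hD2 : D ∉ spec X₂ := by
    rintro ⟨u, hu, v, hv, huv, hdist⟩
    rcases (hbip u v).mp hdist with ⟨hu1, _⟩ | ⟨_, hv1⟩
    · exact absurd (Set.mem_inter hu1 hu) (by simp [hdisj])
    · exact absurd (Set.mem_inter hv1 hv) (by simp [hdisj])
  -- counting
  have hn1 : X₁.ncard + X₂.ncard = Fintype.card X := by
    rw [← Set.ncard_union_eq (Set.disjoint_iff_inter_eq_empty.mpr hdisj) (Set.toFinite X₁) (Set.toFinite X₂),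
      hunion, Set.ncard_univ, Nat.card_eq_fintype_card]
  have hs1 := spec_key hultra X₁.ncard X₁ le_rfl ⟨a, ha⟩
  have hs2 := spec_key hultra X₂.ncard X₂ le_rfl ⟨b, hb⟩
  have hinter : (spec X₁ ∪ spec X₂).ncard + (spec X₁ ∩ spec X₂).ncard
      = (spec X₁).ncard + (spec X₂).ncard :=
    Set.ncard_union_add_ncard_inter _ _ (spec_finite X₁) (spec_finite X₂)
  have hDnot : D ∉ spec X₁ ∪ spec X₂ := by
    rintro (h | h); exacts [hD1 h, hD2 h]
  have htot : (spec (Set.univ : Set X)).ncard = (spec X₁ ∪ spec X₂).ncard + 1 := by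
    rw [hun, Set.union_singleton, Set.ncard_insert_of_notMem hDnot
      ((spec_finite X₁).union (spec_finite X₂))]
  have hzero : (spec X₁ ∩ spec X₂).ncard = 0 := by omega
  have : (spec X₁ ∩ spec X₂).Finite := (spec_finite X₁).inter_of_left _
  rw [← Set.ncard_eq_zero this] at *
  exact hzero
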